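/- For all complex s with Re(s) > 1 and all complex numbers u and v, u·∑_{n≥1} t_{n-1}/n^s + v·∑_{n≥1} t_n/n^s = ((u+v)/2)·ζ(s) − (1/2)·(∑_{n≥1} ε_{n-1}/n^s)·(u + v·(1+2^s)/(1−2^s)). -/

import Mathlib

open Complex

def tm (n : ℕ) : ℕ := (Nat.digits 2 n).sum % 2
noncomputable def eps (n : ℕ) : ℂ := (-1) ^ tm n

lemma tm_lt_two (n : ℕ) : tm n < 2 := Nat.mod_lt _ (by norm_num)

lemma tm_two_mul (n : ℕ) : tm (2 * n) = tm n := by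
  rcases Nat.eq_zero_or_pos n with h | h
  · simp [h]
  · unfold tm
    rw [Nat.digits_def' (by norm_num : (1:ℕ) < 2) (by omega)]
    have h1 : 2 * n % 2 = 0 := by omega
    have h2 : 2 * n / 2 = n := by omega
    simp [h1, h2]

lemma tm_two_mul_add_one (n : ℕ) : tm (2 * n + 1) = (tm n + 1) % 2 := by
  unfold tm
  rw [Nat.digits_def' (by norm_num : (1:ℕ) < 2) (by omega)]
  have h1 : (2 * n + 1) % 2 = 1 := by omega
  have h2 : (2 * n + 1) / 2 = n := by omega
  simp [h1, h2]
  omega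

lemma eps_two_mul (n : ℕ) : eps (2 * n) = eps n := by
  unfold eps; rw [tm_two_mul]

lemma eps_two_mul_add_one (n : ℕ) : eps (2 * n + 1) = -eps n := by
  unfold eps
  rw [tm_two_mul_add_one]
  obtain h | h : tm n = 0 ∨ tm n = 1 := by have := tm_lt_two n; omega
  · simp [h]
  · simp [h]

lemma norm_eps (n : ℕ) : ‖eps n‖ = 1 := by
  unfold eps
  rw [norm_pow, norm_neg, norm_one, one_pow]

lemma coe_tm (n : ℕ) : (tm n : ℂ) = (1 - eps n) / 2 := by
  unfold eps
  obtain h | h : tm n = 0 ∨ tm n = 1 := by have := tm_lt_two n; omega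
  · simp [h]
  · rw [h]; norm_num

lemma summable_aux {s : ℂ} (hs : 1 < s.re) (c : ℕ → ℂ) (hc : ∀ n, ‖c n‖ ≤ 1) :
    Summable (fun n : ℕ => c n / ((n : ℂ) + 1) ^ s) := by
  have hbase : Summable (fun n : ℕ => 1 / ((n : ℝ) + 1) ^ s.re) := by
    have h := (Real.summable_one_div_nat_rpow.mpr hs).comp_injective Nat.succ_injective
    apply h.congr
    intro n
    simp only [Function.comp, Nat.succ_eq_add_one]
    push_cast
    ring
  refine Summable.of_norm (hbase.of_nonneg_of_le (fun n => norm_nonneg _) fun n => ?_)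
  have hpos : (0 : ℝ) < (n : ℝ) + 1 := by positivity
  rw [norm_div]
  have hd : ‖((n : ℂ) + 1) ^ s‖ = ((n : ℝ) + 1) ^ s.re := by
    have : ((n : ℂ) + 1) = (((n : ℝ) + 1 : ℝ) : ℂ) := by push_cast; ring
    rw [this, norm_cpow_eq_rpow_re_of_pos hpos]
  rw [hd]
  have h0 : (0 : ℝ) < ((n : ℝ) + 1) ^ s.re := Real.rpow_pos_of_pos hpos _
  exact div_le_div_of_nonneg_right (hc n) h0.le

lemma two_cpow_mul {s : ℂ} (k : ℕ) : ((2 * (k : ℂ) + 2)) ^ s = (2 : ℂ) ^ s * ((k : ℂ) + 1) ^ s := by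
  have : (2 * (k : ℂ) + 2) = (((2 : ℝ)) : ℂ) * (((k : ℝ) + 1 : ℝ) : ℂ) := by push_cast; ring
  rw [this, mul_cpow_ofReal_nonneg (by norm_num) (by positivity)]
  norm_num

theorem stmt_5 (s : ℂ) (hs : 1 < s.re) (u v : ℂ) :
    u * (∑' n : ℕ, (tm n : ℂ) / ((n : ℂ) + 1) ^ s) +
      v * (∑' n : ℕ, (tm (n + 1) : ℂ) / ((n : ℂ) + 1) ^ s) =
    ((u + v) / 2) * riemannZeta s -
      (1 / 2) * (∑' n : ℕ, eps n / ((n : ℂ) + 1) ^ s) *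
        (u + v * (1 + 2 ^ s) / (1 - 2 ^ s)) := by
  have h2pow : ‖(2 : ℂ) ^ s‖ = (2 : ℝ) ^ s.re := by
    have h : (2 : ℂ) = (((2:ℝ)) : ℂ) := by norm_num
    rw [h, norm_cpow_eq_rpow_re_of_pos (by norm_num)]
  have h2gt : (1 : ℝ) < ‖(2 : ℂ) ^ s‖ := by
    rw [h2pow]
    exact Real.one_lt_rpow_iff_of_pos (by norm_num) |>.mpr (Or.inl ⟨by norm_num, by linarith⟩)
  have h2ne : (2 : ℂ) ^ s ≠ 0 := by
    intro h; rw [h] at h2gt; simp at h2gt; linarith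
  have hne : (1 : ℂ) - 2 ^ s ≠ 0 := by
    intro h
    have h1 : (2 : ℂ) ^ s = 1 := by linear_combination -h
    rw [h1] at h2gt; simp at h2gt
  have hone : Summable (fun n : ℕ => 1 / ((n : ℂ) + 1) ^ s) :=
    summable_aux hs (fun _ => 1) (fun n => by simp)
  have hF : Summable (fun n : ℕ => eps n / ((n : ℂ) + 1) ^ s) :=
    summable_aux hs eps (fun n => (norm_eps n).le)
  have hG : Summable (fun n : ℕ => eps (n + 1) / ((n : ℂ) + 1) ^ s) :=
    summable_aux hs (fun n => eps (n + 1)) (fun n => (norm_eps (n + 1)).le)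
  set Z := ∑' n : ℕ, 1 / ((n : ℂ) + 1) ^ s with hZdef
  set F := ∑' n : ℕ, eps n / ((n : ℂ) + 1) ^ s with hFdef
  set G := ∑' n : ℕ, eps (n + 1) / ((n : ℂ) + 1) ^ s with hGdef
  set H := ∑' n : ℕ, eps n / (2 * (n : ℂ) + 1) ^ s with hHdef
  have hFsplit : H + -((2:ℂ) ^ s)⁻¹ * F = F := by
    have he : Summable (fun k : ℕ => eps (2 * k) / (((2 * k : ℕ) : ℂ) + 1) ^ s) :=
      hF.comp_injective (fun a b h => by omega)
    have ho : Summable (fun k : ℕ => eps (2 * k + 1) / (((2 * k + 1 : ℕ) : ℂ) + 1) ^ s) :=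
      hF.comp_injective (fun a b h => by omega)
    have heq := tsum_even_add_odd (f := fun n : ℕ => eps n / ((n : ℂ) + 1) ^ s) he ho
    have h1 : ∑' (k : ℕ), eps (2 * k) / (((2 * k : ℕ) : ℂ) + 1) ^ s = H := by
      rw [hHdef]
      refine tsum_congr fun k => ?_
      rw [eps_two_mul]
      congr 2
      push_cast; ring
    have h2 : ∑' (k : ℕ), eps (2 * k + 1) / (((2 * k + 1 : ℕ) : ℂ) + 1) ^ s
        = -((2:ℂ) ^ s)⁻¹ * F := by
      rw [hFdef, ← tsum_mul_left]
      refine tsum_congr fun k => ?_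
      rw [eps_two_mul_add_one,
        show (((2 * k + 1 : ℕ) : ℂ) + 1) = (2 * (k : ℂ) + 2) by push_cast; ring,
        two_cpow_mul]
      simp only [div_eq_mul_inv, mul_inv]
      ring
    rw [h1, h2] at heq
    exact heq
  have hGsplit : -H + ((2:ℂ) ^ s)⁻¹ * G = G := by
    have he : Summable (fun k : ℕ => eps (2 * k + 1) / (((2 * k : ℕ) : ℂ) + 1) ^ s) :=
      hG.comp_injective (fun a b h => by omega)
    have ho : Summable (fun k : ℕ => eps (2 * k + 1 + 1) / (((2 * k + 1 : ℕ) : ℂ) + 1) ^ s) :=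
      hG.comp_injective (fun a b h => by omega)
    have heq := tsum_even_add_odd (f := fun n : ℕ => eps (n + 1) / ((n : ℂ) + 1) ^ s) he ho
    have h1 : ∑' (k : ℕ), eps (2 * k + 1) / (((2 * k : ℕ) : ℂ) + 1) ^ s = -H := by
      rw [hHdef, ← tsum_neg]
      refine tsum_congr fun k => ?_
      rw [eps_two_mul_add_one,
        show (((2 * k : ℕ) : ℂ) + 1) = (2 * (k : ℂ) + 1) by push_cast; ring]
      rw [neg_div]
    have h2 : ∑' (k : ℕ), eps (2 * k + 1 + 1) / (((2 * k + 1 : ℕ) : ℂ) + 1) ^ s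
        = ((2:ℂ) ^ s)⁻¹ * G := by
      rw [hGdef, ← tsum_mul_left]
      refine tsum_congr fun k => ?_
      rw [show 2 * k + 1 + 1 = 2 * (k + 1) by ring, eps_two_mul,
        show (((2 * k + 1 : ℕ) : ℂ) + 1) = (2 * (k : ℂ) + 2) by push_cast; ring,
        two_cpow_mul]
      simp only [div_eq_mul_inv, mul_inv]
      ring
    rw [h1, h2] at heq
    exact heq
  have key : F * (1 + 2 ^ s) = G * (1 - 2 ^ s) := by
    have k1 : (2:ℂ) ^ s * H - F = 2 ^ s * F := by
      have h := congrArg (fun x => (2:ℂ) ^ s * x) hFsplit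
      simp only [mul_add, mul_neg, ← mul_assoc, mul_inv_cancel₀ h2ne] at h
      linear_combination h
    have k2 : -((2:ℂ) ^ s * H) + G = 2 ^ s * G := by
      have h := congrArg (fun x => (2:ℂ) ^ s * x) hGsplit
      simp only [mul_add, mul_neg, ← mul_assoc, mul_inv_cancel₀ h2ne] at h
      linear_combination h
    linear_combination -k1 - k2
  have htm1 : ∑' n : ℕ, (tm n : ℂ) / ((n : ℂ) + 1) ^ s = (Z - F) / 2 := by
    rw [hZdef, hFdef, ← Summable.tsum_sub hone hF, ← tsum_div_const]
    exact tsum_congr fun n => by rw [coe_tm]; ring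
  have htm2 : ∑' n : ℕ, (tm (n + 1) : ℂ) / ((n : ℂ) + 1) ^ s = (Z - G) / 2 := by
    rw [hZdef, hGdef, ← Summable.tsum_sub hone hG, ← tsum_div_const]
    exact tsum_congr fun n => by rw [coe_tm]; ring
  rw [htm1, htm2, zeta_eq_tsum_one_div_nat_add_one_cpow hs, ← hZdef]
  field_simp
  linear_combination v * key
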